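/- If Q is a connected quandle on n > 1 elements with Inn(Q) = A_n (the alternating group on Q), then n = 4. -/

import Mathlib

universe u

/-- A quandle with a *right* self-distributive operation `x ▷ y`, following
Ehrman–Gurpinar–Thibault–Yetter. -/
class RQuandle (Q : Type u) where
  act : Q → Q → Q
  act_self : ∀ x : Q, act x x = x
  act_rinv : ∀ a b : Q, ∃! y, act y a = b
  act_distrib : ∀ a b c : Q, act (act a b) c = act (act a c) (act b c)

infixl:65 " ▷ " => RQuandle.act

namespace RQuandle

variable {Q : Type u} [RQuandle Q]

/-- The inner automorphism `S_y : x ↦ x ▷ y`, as a permutation of `Q`. -/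
noncomputable def SPerm (y : Q) : Equiv.Perm Q :=
  Equiv.ofBijective (fun x => x ▷ y)
    ⟨fun a b h => by
        obtain ⟨c, _, hu⟩ := RQuandle.act_rinv y (b ▷ y)
        exact (hu a h).trans (hu b rfl).symm,
      fun b => (RQuandle.act_rinv y b).exists⟩

@[simp] lemma SPerm_apply (x y : Q) : SPerm y x = x ▷ y := rfl

/-- The inner automorphism group of a quandle: the subgroup of `Equiv.Perm Q`
generated by the maps `S_y`. -/
def Inn (Q : Type u) [RQuandle Q] : Subgroup (Equiv.Perm Q) :=
  Subgroup.closure (Set.range (SPerm : Q → Equiv.Perm Q))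

lemma SPerm_mem_Inn (y : Q) : SPerm y ∈ Inn Q :=
  Subgroup.subset_closure ⟨y, rfl⟩

/-- A quandle is (algebraically) connected when `Inn Q` acts transitively. -/
def Connected (Q : Type u) [RQuandle Q] : Prop :=
  ∀ x y : Q, ∃ p ∈ Inn Q, p x = y

/-- The orbit of `s` under the inner automorphism group. -/
def orbitSet (s : Q) : Set Q := {t | ∃ p ∈ Inn Q, p s = t}

/-- `f` is an automorphism of the quandle `Q`. -/
def IsQAut (f : Equiv.Perm Q) : Prop := ∀ x y : Q, f (x ▷ y) = f x ▷ f y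

/-- Key conjugation identity: in left-to-right (right action) convention this is
`S_{x ▷ y} = S_y⁻¹ S_x S_y`. -/
lemma SPerm_conj (x y : Q) : SPerm (x ▷ y) = SPerm y * SPerm x * (SPerm y)⁻¹ := by
  rw [eq_mul_inv_iff_mul_eq]
  ext u
  simp only [Equiv.Perm.mul_apply, SPerm_apply]
  exact (RQuandle.act_distrib u x y).symm

/-- Relators for the universal augmentation group `Γ_Q`: `|x ▷ y| = |y|⁻¹ |x| |y|`. -/
def augRels (Q : Type u) [RQuandle Q] : Set (FreeGroup Q) :=
  {w | ∃ x y : Q,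
    w = FreeGroup.of (x ▷ y) * ((FreeGroup.of y)⁻¹ * FreeGroup.of x * FreeGroup.of y)⁻¹}

/-- The universal augmentation group `Γ_Q` of a quandle. -/
abbrev Gamma (Q : Type u) [RQuandle Q] := PresentedGroup (augRels Q)

/-- The generator `|x| ∈ Γ_Q`. -/
def gen (x : Q) : Gamma Q := PresentedGroup.of x

/-- The canonical homomorphism `Γ_Q → Aut(Q)` sending `|y|` to `S_y`.  Since the
paper composes automorphisms as right actions, this is a homomorphism into the
opposite of the permutation group. -/
noncomputable def canHom (Q : Type u) [RQuandle Q] : Gamma Q →* (Equiv.Perm Q)ᵐᵒᵖ :=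
  PresentedGroup.toGroup (f := fun y => MulOpposite.op (SPerm y)) (by
    rintro w ⟨x, y, rfl⟩
    simp only [map_mul, map_inv, FreeGroup.lift_apply_of]
    rw [← MulOpposite.op_inv, ← MulOpposite.op_mul, ← MulOpposite.op_mul, SPerm_conj]
    simp [mul_assoc])

@[simp] lemma canHom_gen (y : Q) : canHom Q (gen y) = MulOpposite.op (SPerm y) :=
  PresentedGroup.toGroup.of _

lemma orbit_act_mem {s x : Q} (y : Q) (hx : x ∈ orbitSet s) : x ▷ y ∈ orbitSet s := by
  obtain ⟨p, hp, rfl⟩ := hx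
  exact ⟨SPerm y * p, mul_mem (SPerm_mem_Inn y) hp, rfl⟩

lemma orbit_actinv_mem {s x : Q} (y : Q) (hx : x ∈ orbitSet s) :
    (SPerm y).symm x ∈ orbitSet s := by
  obtain ⟨p, hp, rfl⟩ := hx
  exact ⟨(SPerm y)⁻¹ * p, mul_mem (inv_mem (SPerm_mem_Inn y)) hp, rfl⟩

lemma orbit_mem_iff (t : Q) (y : Q) {u : Q} :
    u ∈ orbitSet t ↔ u ▷ y ∈ orbitSet t := by
  constructor
  · exact fun h => orbit_act_mem y h
  · intro h
    have := orbit_actinv_mem y h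
    rw [← SPerm_apply u y, Equiv.symm_apply_apply] at this
    exact this

/-- Each orbit of `Inn Q` is a subquandle. -/
instance orbitQuandle (s : Q) : RQuandle (orbitSet s) where
  act a b := ⟨a.1 ▷ b.1, orbit_act_mem b.1 a.2⟩
  act_self a := Subtype.ext (RQuandle.act_self a.1)
  act_rinv a b := by
    refine ⟨⟨(SPerm a.1).symm b.1, orbit_actinv_mem a.1 b.2⟩, Subtype.ext ?_, ?_⟩
    · exact (SPerm a.1).apply_symm_apply b.1
    · rintro ⟨z, hz⟩ h
      apply Subtype.ext
      have hz' : z ▷ a.1 = b.1 := congrArg Subtype.val h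
      show z = (SPerm a.1).symm b.1
      rw [← hz']
      exact ((SPerm a.1).symm_apply_apply z).symm
  act_distrib a b c := Subtype.ext (RQuandle.act_distrib a.1 b.1 c.1)

/-- Restriction of `S_x` to the orbit of `t`. -/
noncomputable def phi (t : Q) (x : Q) : Equiv.Perm (orbitSet t) :=
  (SPerm x).subtypePerm (fun u => (orbit_mem_iff t x (u := u)).symm)

/-- The quandle axioms, as a predicate on a binary operation. -/
def IsRQuandleOp {A : Type u} (op : A → A → A) : Prop :=
  (∀ x, op x x = x) ∧ (∀ a b, ∃! y, op y a = b) ∧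
    ∀ a b c, op (op a b) c = op (op a c) (op b c)

end RQuandle

/-!
Every inner automorphism `p` of a quandle is an automorphism, so `S_{p y} p = p S_y`; in
particular `p` commutes with `S_y` whenever it fixes `y`. If `Inn Q = A_n`, each `S_y` is thus an
even permutation fixing `y` and commuting with the stabilizer of `y` in `A_n`. For `n ≤ 3` an even
permutation with a fixed point is trivial, and for `n ≥ 5` a 3-cycle in that stabilizer moving
`S_y x` but fixing `x` shows `S_y x = x`. So all `S_y` are trivial, contradicting connectedness.
For `n = 4` the stabilizer is cyclic of order 3 and contains non-trivial elements of its own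
centralizer.
-/

namespace Equiv.Perm

variable {α : Type*} [Fintype α] [DecidableEq α]

theorem eq_one_of_sign_eq_one_of_apply_eq_self {σ : Perm α} {a : α} (hσ : sign σ = 1)
    (ha : σ a = a) (hcard : Fintype.card α ≤ 3) : σ = 1 := by
  have hsupp : σ.support.card ≤ 2 := by
    have : σ.support ⊆ Finset.univ.erase a := fun x hx =>
      Finset.mem_erase.mpr ⟨fun hxa => mem_support.mp hx (hxa ▸ ha), Finset.mem_univ x⟩
    have := Finset.card_le_card this
    rw [Finset.card_erase_of_mem (Finset.mem_univ a), Finset.card_univ] at this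
    omega
  have hnot_swap : ¬σ.IsSwap := fun hswap => by
    rw [hswap.sign_eq] at hσ
    exact absurd hσ (by decide)
  have := σ.card_support_ne_one
  rw [← card_support_eq_zero]
  rw [← card_support_eq_two] at hnot_swap
  omega

theorem eq_one_of_forall_commute_of_apply_eq_self {σ : Perm α} {a : α} (ha : σ a = a)
    (hcard : 5 ≤ Fintype.card α) (hσ : ∀ g ∈ alternatingGroup α, g a = a → Commute g σ) :
    σ = 1 := by
  by_contra hne
  obtain ⟨x, hx⟩ : ∃ x, σ x ≠ x := by
    by_contra! h
    exact hne (Equiv.ext h)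
  set y := σ x
  have hxa : x ≠ a := by rintro rfl; exact hx ha
  have hya : y ≠ a := fun h => hxa (σ.injective (h.trans ha.symm))
  have hcompl : 1 < (Finset.univ \ {a, x, y}).card := by
    have : ({a, x, y} : Finset α).card ≤ 3 := Finset.card_le_three
    rw [Finset.card_sdiff_of_subset (Finset.subset_univ _), Finset.card_univ]
    omega
  obtain ⟨c, hc, d, hd, hcd⟩ := Finset.one_lt_card.mp hcompl
  simp only [Finset.mem_sdiff, Finset.mem_univ, true_and, Finset.mem_insert,
    Finset.mem_singleton, not_or] at hc hd
  obtain ⟨hca, hcx, hcy⟩ := hc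
  obtain ⟨hda, hdx, hdy⟩ := hd
  set g := swap y c * swap y d
  have hg : g ∈ alternatingGroup α := by
    rw [mem_alternatingGroup, map_mul, sign_swap (Ne.symm hcy), sign_swap (Ne.symm hdy)]
    decide
  have hga : g a = a := by
    rw [mul_apply, swap_apply_of_ne_of_ne hya.symm (Ne.symm hda),
      swap_apply_of_ne_of_ne hya.symm (Ne.symm hca)]
  have hgx : g x = x := by
    rw [mul_apply, swap_apply_of_ne_of_ne (Ne.symm hx) (Ne.symm hdx),
      swap_apply_of_ne_of_ne (Ne.symm hx) (Ne.symm hcx)]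
  have hgy : g y = d := by
    rw [mul_apply, swap_apply_left, swap_apply_of_ne_of_ne hdy (Ne.symm hcd)]
  have hcomm : g y = y := by
    simpa only [mul_apply, hgx] using Perm.congr_fun (hσ g hg hga).eq x
  exact hdy (hgy ▸ hcomm)

end Equiv.Perm

namespace RQuandle

variable {Q : Type u} [RQuandle Q]

lemma isQAut_SPerm (y : Q) : IsQAut (SPerm y) := fun a b => act_distrib a b y

lemma IsQAut.mul {f g : Equiv.Perm Q} (hf : IsQAut f) (hg : IsQAut g) : IsQAut (f * g) :=
  fun x y => by simp only [Equiv.Perm.mul_apply, hg x y, hf (g x) (g y)]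

lemma IsQAut.inv {f : Equiv.Perm Q} (hf : IsQAut f) : IsQAut f⁻¹ := fun x y =>
  f.injective <| by rw [hf]; simp

lemma isQAut_of_mem_Inn {p : Equiv.Perm Q} (hp : p ∈ Inn Q) : IsQAut p := by
  induction hp using Subgroup.closure_induction with
  | mem _ h => obtain ⟨y, rfl⟩ := h; exact isQAut_SPerm y
  | one => exact fun _ _ => rfl
  | mul _ _ _ _ hf hg => exact hf.mul hg
  | inv _ _ hf => exact hf.inv

lemma IsQAut.SPerm_apply_mul {f : Equiv.Perm Q} (hf : IsQAut f) (x : Q) :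
    SPerm (f x) * f = f * SPerm x :=
  Equiv.ext fun u => (hf u x).symm

lemma IsQAut.commute_SPerm {f : Equiv.Perm Q} (hf : IsQAut f) {y : Q} (hy : f y = y) :
    Commute f (SPerm y) := by
  have := (hf.SPerm_apply_mul y).symm
  rwa [hy] at this

lemma Connected.exists_SPerm_ne_one [Nontrivial Q] (hc : Connected Q) : ∃ y : Q, SPerm y ≠ 1 := by
  by_contra! h
  obtain ⟨x, y, hxy⟩ := exists_pair_ne Q
  obtain ⟨p, hp, rfl⟩ := hc x y
  have hInn : Inn Q = ⊥ := by
    rw [Inn, Subgroup.closure_eq_bot_iff]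
    rintro _ ⟨z, rfl⟩
    exact h z
  rw [hInn, Subgroup.mem_bot] at hp
  exact hxy (by rw [hp]; rfl)

end RQuandle

open RQuandle in
theorem inn_eq_alternating_imp {Q : Type u} [RQuandle Q] [Fintype Q] [DecidableEq Q]
    (hc : Connected Q) (hn : 1 < Fintype.card Q) (h : Inn Q = alternatingGroup Q) :
    Fintype.card Q = 4 := by
  have : Nontrivial Q := Fintype.one_lt_card_iff_nontrivial.mp hn
  obtain ⟨y, hy⟩ := hc.exists_SPerm_ne_one
  have hfix : SPerm y y = y := act_self y
  have heven : Equiv.Perm.sign (SPerm y) = 1 :=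
    Equiv.Perm.mem_alternatingGroup.mp (h ▸ SPerm_mem_Inn y)
  by_contra h4
  refine hy ?_
  rcases le_or_gt (Fintype.card Q) 3 with hle | hgt
  · exact Equiv.Perm.eq_one_of_sign_eq_one_of_apply_eq_self heven hfix hle
  · exact Equiv.Perm.eq_one_of_forall_commute_of_apply_eq_self hfix (by omega)
      fun g hg hgy => (isQAut_of_mem_Inn (h ▸ hg)).commute_SPerm hgy
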